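/- arXiv:2501.10253 — 2 statements merged into one kernel-verified Lean document; each statement's English description precedes it below -/
import Mathlib

section
/- Let q1, q4 be odd integers with q1 ≠ q4, and consider the 5-tuple (q1,q1,q1,q4,q4). Then for every permutation σ of {1,2,3,4,5}, gcd(q_{σ(1)} + q_{σ(2)}, q_{σ(3)} + q_{σ(4)}) = 2 holds if and only if |q1 + q4| = 2. -/
private lemma gcd_neg_right' (a b : ℤ) : Int.gcd a (-b) = Int.gcd a b := by
  simp [Int.gcd]

private lemma gcd_two_oddmul (q : ℤ) (_hq : Odd q) (e : ℤ) (he : e = 2 ∨ e = -2) :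
    Int.gcd (q + q) e = 2 := by
  have h2 : Int.gcd (q + q) 2 = 2 := by
    have : Int.gcd (q + q) 2 = Int.gcd (2 * q) (2 * 1) := by ring_nf
    rw [this, Int.gcd_mul_left]
    simp
  rcases he with rfl | rfl
  · exact h2
  · rw [show (-2 : ℤ) = -(2:ℤ) by ring, gcd_neg_right']; exact h2

private lemma gcd_self_two (a : ℤ) (h : |a| = 2) : Int.gcd a a = 2 := by
  rw [Int.gcd_self]
  have := Int.abs_eq_natAbs a
  omega

private lemma gcd_mixed (q1 q4 : ℤ) (hq1 : Odd q1) (h2 : |q1 + q4| = 2) :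
    Int.gcd (q1 + q1) (q4 + q4) = 2 := by
  have hcop : Int.gcd q1 q4 = 1 := by
    set g := Int.gcd q1 q4 with hg
    have hd : (g : ℤ) ∣ q1 + q4 := dvd_add (Int.gcd_dvd_left ..) (Int.gcd_dvd_right ..)
    have hd2 : (g : ℤ) ∣ 2 := by
      have : (g : ℤ) ∣ |q1 + q4| := (dvd_abs _ _).mpr hd
      rwa [h2] at this
    have hdn : g ∣ 2 := by exact_mod_cast hd2
    have hgodd : g ≠ 2 := by
      intro hge
      have : (2 : ℤ) ∣ q1 := by
        have := Int.gcd_dvd_left (a := q1) (b := q4)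
        rw [← hg, hge] at this
        exact_mod_cast this
      exact (fun hev => (Int.not_even_iff_odd.mpr hq1) hev) ((even_iff_two_dvd).mpr this)
    have hle : g ≤ 2 := Nat.le_of_dvd (by norm_num) hdn
    interval_cases g <;> omega
  have : Int.gcd (q1 + q1) (q4 + q4) = Int.gcd (2 * q1) (2 * q4) := by ring_nf
  rw [this, Int.gcd_mul_left, hcop]
  simp

theorem stmt_0 (q1 q4 : ℤ) (hq1 : Odd q1) (hq4 : Odd q4) (hne : q1 ≠ q4) :
    (∀ σ : Equiv.Perm (Fin 5),
      Int.gcd ((![q1, q1, q1, q4, q4] : Fin 5 → ℤ) (σ 0) + (![q1, q1, q1, q4, q4] : Fin 5 → ℤ) (σ 1))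
        ((![q1, q1, q1, q4, q4] : Fin 5 → ℤ) (σ 2) + (![q1, q1, q1, q4, q4] : Fin 5 → ℤ) (σ 3)) = 2)
    ↔ |q1 + q4| = 2 := by
  constructor
  · intro h
    have hσ : Function.LeftInverse (![0, 2, 4, 1, 3] : Fin 5 → Fin 5)
        (![0, 3, 1, 4, 2] : Fin 5 → Fin 5) ∧ Function.RightInverse
        (![0, 2, 4, 1, 3] : Fin 5 → Fin 5) (![0, 3, 1, 4, 2] : Fin 5 → Fin 5) := by
      constructor <;> intro x <;> fin_cases x <;> rfl
    have := h ⟨![0, 3, 1, 4, 2], ![0, 2, 4, 1, 3], hσ.1, hσ.2⟩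
    simp only [Equiv.coe_fn_mk, Matrix.cons_val_zero, Matrix.cons_val_one, Matrix.head_cons,
      Matrix.cons_val_two, Matrix.tail_cons, Matrix.cons_val_three, Matrix.cons_val_four] at this
    rw [Int.gcd_self] at this
    have habs := Int.abs_eq_natAbs (q1 + q4)
    omega
  · intro h2 σ
    set v : Fin 5 → ℤ := ![q1, q1, q1, q4, q4] with hv
    have hvq : ∀ i : Fin 5, v i = q1 ∨ v i = q4 := by
      intro i; fin_cases i <;> simp [hv]
    have hlt : ∀ i : Fin 5, v i = q1 → (i : ℕ) < 3 := by
      intro i; fin_cases i <;> simp [hv] <;> intro h <;> exact absurd h.symm hne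
    have hge : ∀ i : Fin 5, v i = q4 → 3 ≤ (i : ℕ) := by
      intro i; fin_cases i <;> simp [hv] <;> intro h <;> exact absurd h hne
    have hinj : ∀ i j : Fin 5, i ≠ j → ((σ i : Fin 5) : ℕ) ≠ ((σ j : Fin 5) : ℕ) := by
      intro i j hij h
      exact hij (σ.injective (Fin.ext h))
    have he : q1 + q4 = 2 ∨ q1 + q4 = -2 := by
      rcases abs_eq (by norm_num : (0:ℤ) ≤ 2) |>.mp h2 with h | h
      · exact Or.inl h
      · exact Or.inr h
    show Int.gcd (v (σ 0) + v (σ 1)) (v (σ 2) + v (σ 3)) = 2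
    have h01 := hinj 0 1 (by decide)
    have h02 := hinj 0 2 (by decide)
    have h03 := hinj 0 3 (by decide)
    have h12 := hinj 1 2 (by decide)
    have h13 := hinj 1 3 (by decide)
    have h23 := hinj 2 3 (by decide)
    rcases hvq (σ 0) with ha | ha <;> rcases hvq (σ 1) with hb | hb <;>
      rcases hvq (σ 2) with hc | hc <;> rcases hvq (σ 3) with hd | hd <;>
      rw [ha, hb, hc, hd]
    -- 16 cases
    · -- q1 q1 q1 q1 : impossible
      have := hlt _ ha; have := hlt _ hb; have := hlt _ hc; have := hlt _ hd
      omega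
    · exact gcd_two_oddmul q1 hq1 (q1 + q4) he
    · rw [show q4 + q1 = q1 + q4 by ring]
      exact gcd_two_oddmul q1 hq1 (q1 + q4) he
    · exact gcd_mixed q1 q4 hq1 h2
    · rw [Int.gcd_comm]
      exact gcd_two_oddmul q1 hq1 (q1 + q4) he
    · exact gcd_self_two _ h2
    · rw [show q4 + q1 = q1 + q4 by ring]
      exact gcd_self_two _ h2
    · rw [Int.gcd_comm]
      exact gcd_two_oddmul q4 hq4 (q1 + q4) he
    · rw [show q4 + q1 = q1 + q4 by ring, Int.gcd_comm]
      exact gcd_two_oddmul q1 hq1 (q1 + q4) he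
    · rw [show q4 + q1 = q1 + q4 by ring]
      exact gcd_self_two _ h2
    · rw [show q4 + q1 = q1 + q4 by ring]
      exact gcd_self_two _ h2
    · rw [show q4 + q1 = q1 + q4 by ring, Int.gcd_comm]
      exact gcd_two_oddmul q4 hq4 (q1 + q4) he
    · rw [Int.gcd_comm]
      exact gcd_mixed q1 q4 hq1 h2
    · exact gcd_two_oddmul q4 hq4 (q1 + q4) he
    · rw [show q4 + q1 = q1 + q4 by ring]
      exact gcd_two_oddmul q4 hq4 (q1 + q4) he
    · -- q4 q4 q4 q4 : impossible
      have := hge _ ha; have := hge _ hb; have := hge _ hc; have := hge _ hd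
      have := (σ 0).isLt; have := (σ 1).isLt; have := (σ 2).isLt; have := (σ 3).isLt
      omega
end

section
/- Let A ∈ SU(5) with entries a_{ij}, and define ν(A) = a_{43}a_{51} + a_{44}a_{52} − a_{41}a_{53} − a_{42}a_{54}. For any matrix M = [[a, b],[−conj(b)z, conj(a)z]] ∈ U(2) with z ∈ S¹ and |a|² + |b|² = 1, acting on the last two rows of A by left multiplication (rows 4 and 5), we have ν(MA) = z·ν(A). In particular |ν(MA)| = |ν(A)|. -/
/-- `ν(A) = a₄₃a₅₁ + a₄₄a₅₂ − a₄₁a₅₃ − a₄₂a₅₄` (rows and columns indexed from 0). -/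
def nu (A : Matrix (Fin 5) (Fin 5) ℂ) : ℂ :=
  A 3 2 * A 4 0 + A 3 3 * A 4 1 - A 3 0 * A 4 2 - A 3 1 * A 4 3

/-!
`ν(A)` is an alternating bilinear form evaluated at rows 4 and 5 of `A`, so replacing these rows
by `M` times them multiplies `ν` by `det M`, and `det M = z (|a|² + |b|²) = z`.
-/

theorem LinearMap.IsAlt.apply_smul_add_smul {R M N : Type*} [CommRing R] [AddCommGroup M]
    [Module R M] [AddCommGroup N] [Module R N] {B : M →ₗ[R] M →ₗ[R] N} (hB : B.IsAlt)
    (a b c d : R) (x y : M) :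
    B (a • x + b • y) (c • x + d • y) = (a * d - b * c) • B x y := by
  simp only [map_add, map_smul, LinearMap.add_apply, LinearMap.smul_apply,
    hB.self_eq_zero, smul_zero, ← hB.neg x y, smul_neg]
  module

def nuForm : (Fin 5 → ℂ) →ₗ[ℂ] (Fin 5 → ℂ) →ₗ[ℂ] ℂ :=
  LinearMap.mk₂ ℂ (fun x y => x 2 * y 0 + x 3 * y 1 - x 0 * y 2 - x 1 * y 3)
    (fun _ _ _ => by simp only [Pi.add_apply]; ring)
    (fun _ _ _ => by simp only [Pi.smul_apply, smul_eq_mul]; ring)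
    (fun _ _ _ => by simp only [Pi.add_apply]; ring)
    (fun _ _ _ => by simp only [Pi.smul_apply, smul_eq_mul]; ring)

theorem nuForm_isAlt : nuForm.IsAlt := fun x => by
  simp only [nuForm, LinearMap.mk₂_apply]
  ring

theorem nu_eq_nuForm (A : Matrix (Fin 5) (Fin 5) ℂ) : nu A = nuForm (A 3) (A 4) := rfl

theorem stmt_7_general (A B : Matrix (Fin 5) (Fin 5) ℂ)
    (a b z : ℂ) (hz : ‖z‖ = 1) (hab : ‖a‖ ^ 2 + ‖b‖ ^ 2 = 1)
    (hB4 : ∀ j, B 3 j = a * A 3 j + b * A 4 j)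
    (hB5 : ∀ j, B 4 j = -(starRingEnd ℂ) b * z * A 3 j + (starRingEnd ℂ) a * z * A 4 j) :
    nu B = z * nu A ∧ ‖nu B‖ = ‖nu A‖ := by
  have hrow4 : B 3 = a • A 3 + b • A 4 := funext hB4
  have hrow5 : B 4 = (-(starRingEnd ℂ) b * z) • A 3 + ((starRingEnd ℂ) a * z) • A 4 :=
    funext hB5
  have hdet : a * ((starRingEnd ℂ) a * z) - b * (-(starRingEnd ℂ) b * z) = z := by
    have hconj : a * (starRingEnd ℂ) a + b * (starRingEnd ℂ) b = 1 := by
      simp only [Complex.mul_conj, Complex.normSq_eq_norm_sq]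
      exact_mod_cast hab
    linear_combination z * hconj
  have hnu : nu B = z * nu A := by
    rw [nu_eq_nuForm, hrow4, hrow5, nuForm_isAlt.apply_smul_add_smul, hdet, smul_eq_mul,
      nu_eq_nuForm]
  exact ⟨hnu, by rw [hnu, norm_mul, hz, one_mul]⟩

theorem stmt_7 (A B : Matrix (Fin 5) (Fin 5) ℂ)
    (hA : A ∈ Matrix.specialUnitaryGroup (Fin 5) ℂ)
    (a b z : ℂ) (hz : ‖z‖ = 1) (hab : ‖a‖ ^ 2 + ‖b‖ ^ 2 = 1)
    (hB4 : ∀ j, B 3 j = a * A 3 j + b * A 4 j)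
    (hB5 : ∀ j, B 4 j = -(starRingEnd ℂ) b * z * A 3 j + (starRingEnd ℂ) a * z * A 4 j)
    (hBrest : ∀ i, i ≠ 3 → i ≠ 4 → ∀ j, B i j = A i j) :
    nu B = z * nu A ∧ ‖nu B‖ = ‖nu A‖ :=
  stmt_7_general A B a b z hz hab hB4 hB5
end
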